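/- arXiv:1002.5025 — 3 statements merged into one kernel-verified Lean document; each statement's English description precedes it below -/
import Mathlib

section
/- In a √qPMV-algebra A, the quotient A/≡ is PMV-isomorphic to the PMV-algebra of regular elements R(A) = {a : a ⊕ 0 = a} via the map [x] ↦ x ⊕ 0. -/
/-- A quasi-MV algebra. -/
class QMV (α : Type*) where
  add : α → α → α
  neg : α → α
  zero : α
  one : α
  add_assoc : ∀ x y z : α, add x (add y z) = add (add x y) z
  neg_neg : ∀ x : α, neg (neg x) = x
  add_one : ∀ x : α, add x one = one
  luk : ∀ x y : α, add (neg (add (neg x) y)) y = add (neg (add (neg y) x)) x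
  neg_add_zero : ∀ x : α, neg (add x zero) = add (neg x) zero
  add_add_zero : ∀ x y : α, add (add x y) zero = add x y
  neg_zero : neg (zero : α) = one

namespace QMV
variable {α : Type*} [QMV α]
/-- `x ⊙ y := ¬(¬x ⊕ ¬y)` -/
def odot (x y : α) : α := neg (add (neg x) (neg y))
/-- `x ∧ y := x ⊙ (¬x ⊕ y)` -/
def inf (x y : α) : α := odot x (add (neg x) y)
/-- `x ≤ y iff ¬x ⊕ y = 1` -/
def le (x y : α) : Prop := add (neg x) y = one
end QMV

/-- A √qPMV-algebra structure on a quasi-MV algebra. -/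
class SQPMV (α : Type*) [QMV α] where
  half : α
  sqrt : α → α
  mul : α → α → α
  sqrt_neg : ∀ x : α, sqrt (QMV.neg x) = QMV.neg (sqrt x)
  sqrt_sqrt : ∀ x : α, sqrt (sqrt x) = QMV.neg x
  sqrt_add : ∀ x y : α, QMV.add (sqrt (QMV.add x y)) QMV.zero = half
  sqrt_half : sqrt half = half
  mul_comm : ∀ x y : α, mul x y = mul y x
  mul_assoc : ∀ x y z : α, mul x (mul y z) = mul (mul x y) z
  mul_one : ∀ x : α, mul x QMV.one = QMV.add x QMV.zero
  mul_reg : ∀ x y : α, mul x y = QMV.add (mul x y) QMV.zero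
  mul_distrib : ∀ x y z : α,
    mul x (QMV.odot y (QMV.neg z)) = QMV.odot (mul x y) (QMV.neg (mul x z))
  sqrt_mul : ∀ x y : α, QMV.add (sqrt (mul x y)) QMV.zero = half

/-- `x ≡ y` iff `x ≤ y` and `y ≤ x`. -/
def equiv' {α : Type*} [QMV α] (x y : α) : Prop := QMV.le x y ∧ QMV.le y x

/-- Regular elements: `a ⊕ 0 = a`. -/
def Reg {α : Type*} [QMV α] (a : α) : Prop := QMV.add a QMV.zero = a


section QMVLemmas
namespace QMV
variable {α : Type*} [QMV α]

theorem qneg_one : neg (one : α) = zero := by rw [← neg_zero, neg_neg]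

/-- A1 : ¬(0⊕x)⊕x = 1 -/
theorem qA1 (x : α) : add (neg (add zero x)) x = one := by
  have h := luk (one : α) x
  rw [qneg_one, add_one] at h
  exact h

/-- 0⊕0 = 0 -/
theorem qZ0 : add (zero : α) zero = zero := by
  have h := congrArg neg (qA1 (zero : α))
  rw [neg_add_zero, neg_neg, add_add_zero, qneg_one] at h
  exact h

/-- E1 : ¬(1⊕y)⊕y = y⊕0 -/
theorem qE1 (y : α) : add (neg (add one y)) y = add y zero := by
  have h := luk (zero : α) y
  rw [neg_zero, neg_add_zero, neg_neg, ← add_assoc, qZ0] at h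
  exact h

/-- F4 : ¬(1⊕y)⊕(1⊕y) = 1 -/
theorem qF4 (y : α) : add (neg (add one y)) (add one y) = one := by
  have h := qA1 (add one y)
  rw [add_assoc zero one y, show add (zero:α) one = one from add_one zero] at h
  exact h

/-- 1⊕y = 1 -/
theorem qone_add (y : α) : add (one : α) y = one := by
  have h := qE1 (add one y)
  rw [add_add_zero, add_assoc one one y, show add (one:α) one = one from add_one one, qF4] at h
  exact h.symm

/-- C0 : 0⊕y = y⊕0 -/
theorem qC0 (y : α) : add (zero : α) y = add y zero := by
  have h := qE1 y
  rw [qone_add, qneg_one] at h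
  exact h

/-- x⊕(y⊕0) = x⊕y -/
theorem qadd_reg_right (x y : α) : add x (add y zero) = add x y := by
  rw [add_assoc, add_add_zero]

/-- N : ¬x⊕x = 1 -/
theorem qN (x : α) : add (neg x) x = one := by
  have h := qA1 x
  rw [qC0, neg_add_zero, ← add_assoc, qC0, qadd_reg_right] at h
  exact h

/-- (x⊕0)⊕y = x⊕y -/
theorem qadd_reg_left (x y : α) : add (add x zero) y = add x y := by
  rw [← add_assoc, qC0, qadd_reg_right]

end QMV
end QMVLemmas

section SQLemmas
variable {α : Type*} [QMV α] [SQPMV α]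
open QMV SQPMV
set_option linter.unusedSectionVars false

theorem qodot_one (y : α) : odot y one = add y zero := by
  unfold odot
  rw [qneg_one, neg_add_zero, QMV.neg_neg]

theorem qodot_zero (y : α) : odot y zero = zero := by
  unfold odot
  rw [QMV.neg_zero, add_one, qneg_one]

theorem qodot_self_neg (a : α) : odot a (neg a) = zero := by
  unfold odot
  rw [QMV.neg_neg, qN, qneg_one]

theorem qmul_zero (x : α) : mul x (zero : α) = zero := by
  have h := mul_distrib x (one : α) (one : α)
  rw [qneg_one, qodot_zero, qodot_self_neg] at h
  exact h

theorem qmul_reg_right (x y : α) : mul x (add y zero) = mul x y := by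
  have h := mul_distrib x y (zero : α)
  rw [QMV.neg_zero, qodot_one, qmul_zero, QMV.neg_zero, qodot_one, ← mul_reg] at h
  exact h

theorem qhalf_reg : add (half : α) zero = half := by
  have h := sqrt_add (zero : α) (zero : α)
  rw [qZ0] at h
  rw [← h, add_add_zero]

omit [SQPMV α] in
theorem qequiv_sound (a b : α) (h : equiv' a b) : add a zero = add b zero := by
  obtain ⟨h1, h2⟩ := h
  have h3 := luk a b
  rw [h1, h2, qneg_one, qC0, qC0] at h3
  exact h3.symm

end SQLemmas

/-- The quotient `A/≡` of a √qPMV-algebra is PMV-isomorphic to the algebra of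
regular elements via `[x] ↦ x ⊕ 0`. -/
theorem sqpmv_quotient_iso_regular {α : Type*} [QMV α] [SQPMV α] :
    ∃ f : Quot (equiv' (α := α)) → α,
      (∀ x : α, f (Quot.mk _ x) = QMV.add x QMV.zero) ∧
      (∀ q, Reg (f q)) ∧
      Function.Injective f ∧
      (∀ a : α, Reg a → ∃ q, f q = a) ∧
      (∀ x y : α, f (Quot.mk _ (QMV.add x y)) = QMV.add (f (Quot.mk _ x)) (f (Quot.mk _ y))) ∧
      (∀ x y : α, f (Quot.mk _ (SQPMV.mul x y)) = SQPMV.mul (f (Quot.mk _ x)) (f (Quot.mk _ y))) ∧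
      (∀ x : α, f (Quot.mk _ (QMV.neg x)) = QMV.neg (f (Quot.mk _ x))) ∧
      f (Quot.mk _ (QMV.zero : α)) = QMV.zero ∧
      f (Quot.mk _ (SQPMV.half : α)) = SQPMV.half ∧
      f (Quot.mk _ (QMV.one : α)) = QMV.one := by
  refine ⟨Quot.lift (fun x => QMV.add x QMV.zero) qequiv_sound,
    fun x => rfl, ?_, ?_, ?_, ?_, ?_, ?_, ?_, ?_, ?_⟩
  · intro q
    induction q using Quot.ind with
    | _ x => exact QMV.add_add_zero x QMV.zero
  · intro q1 q2 h
    induction q1 using Quot.ind with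
    | _ x =>
    induction q2 using Quot.ind with
    | _ y =>
    simp only [Quot.lift] at h
    apply Quot.sound
    constructor
    · show QMV.add (QMV.neg x) y = QMV.one
      rw [← QMV.qadd_reg_right, ← h, QMV.qadd_reg_right, QMV.qN]
    · show QMV.add (QMV.neg y) x = QMV.one
      rw [← QMV.qadd_reg_right, h, QMV.qadd_reg_right, QMV.qN]
  · intro a ha
    exact ⟨Quot.mk _ a, ha⟩
  · intro x y
    show QMV.add (QMV.add x y) QMV.zero
      = QMV.add (QMV.add x QMV.zero) (QMV.add y QMV.zero)
    rw [QMV.add_add_zero, QMV.qadd_reg_right, QMV.qadd_reg_left]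
  · intro x y
    show QMV.add (SQPMV.mul x y) QMV.zero
      = SQPMV.mul (QMV.add x QMV.zero) (QMV.add y QMV.zero)
    rw [← SQPMV.mul_reg, qmul_reg_right, SQPMV.mul_comm (QMV.add x QMV.zero) y,
      qmul_reg_right y x]
    exact SQPMV.mul_comm x y
  · intro x
    exact (QMV.neg_add_zero x).symm
  · exact QMV.qZ0
  · exact qhalf_reg
  · exact (QMV.qC0 QMV.one).symm.trans (QMV.add_one QMV.zero)
end

section
/- Let A be a totally ordered PMV_{1/2}-algebra, S_A the pair construction, and D_A the subalgebra of S_A defined by the four quadrant conditions. Then D_A is the largest irreversible Poincaré subalgebra of S_A: D_A satisfies axiom P2 (for every u ∈ D_A and every dyadic s ≥ (1+√2)/(4√2), ((¼•u) ⊕ (¼•√u)) → s = 1), and every subalgebra B of S_A satisfying P2 is contained in D_A. -/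
/-- An MV-algebra. -/
class MV (α : Type*) where
  add : α → α → α
  neg : α → α
  zero : α
  add_assoc : ∀ x y z : α, add x (add y z) = add (add x y) z
  add_comm : ∀ x y : α, add x y = add y x
  add_zero : ∀ x : α, add x zero = x
  neg_neg : ∀ x : α, neg (neg x) = x
  add_top : ∀ x : α, add x (neg zero) = neg zero
  luk : ∀ x y : α, add (neg (add (neg x) y)) y = add (neg (add (neg y) x)) x

namespace MV
variable {α : Type*} [MV α]
/-- `1 := ¬0` -/
def one : α := neg zero
/-- `x ⊙ y := ¬(¬x ⊕ ¬y)` -/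
def odot (x y : α) : α := neg (add (neg x) (neg y))
/-- `x ∧ y := x ⊙ (¬x ⊕ y)` -/
def inf (x y : α) : α := odot x (add (neg x) y)
/-- `x ≤ y iff ¬x ⊕ y = 1` -/
def le (x y : α) : Prop := add (neg x) y = one
end MV

/-- A product MV-algebra (PMV-algebra): an MV-algebra with a commutative monoid
product (unit `1`) satisfying `x • (y ⊙ ¬z) = (x • y) ⊙ ¬(x • z)`. -/
class PMV (α : Type*) [MV α] where
  mul : α → α → α
  mul_comm : ∀ x y : α, mul x y = mul y x
  mul_assoc : ∀ x y z : α, mul x (mul y z) = mul (mul x y) z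
  mul_one : ∀ x : α, mul x MV.one = x
  mul_distrib : ∀ x y z : α,
    mul x (MV.odot y (MV.neg z)) = MV.odot (mul x y) (MV.neg (mul x z))

variable {α : Type*} [MV α] [PMV α]

/-- `(½)ⁿ`: the `n`-fold `•`-power of `half` (`(½)⁰ = 1`). -/
def hpow (half : α) : ℕ → α
  | 0 => MV.one
  | n + 1 => PMV.mul (hpow half n) half

/-- The dyadic element `a/2ⁿ`: the `⊕`-sum of `a` copies of `(½)ⁿ`. -/
def dy (half : α) : ℕ → ℕ → α
  | 0, _ => MV.zero
  | a + 1, n => MV.add (dy half a n) (hpow half n)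

/-- The PMV_{1/2} axioms for a PMV-algebra with a distinguished element `half`
(using natural-number truncated subtraction for `max{0, ·}`). -/
structure IsPMVHalf (half : α) : Prop where
  neg_half : MV.neg half = half
  odot_dy : ∀ a b n m : ℕ, 1 ≤ m → m ≤ n → a ≤ 2 ^ n → b ≤ 2 ^ m →
    MV.odot (dy half a n) (dy half b m) = dy half (a + b * 2 ^ (n - m) - 2 ^ n) n
  mul_dy : ∀ a b n m : ℕ, 1 ≤ n → 1 ≤ m → a ≤ 2 ^ n → b ≤ 2 ^ m →
    PMV.mul (dy half a n) (dy half b m) = dy half (a * b) (n + m)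
  neg_dy : ∀ a n : ℕ, 1 ≤ n → a ≤ 2 ^ n →
    MV.neg (dy half a n) = dy half (2 ^ n - a) n

/-- The subalgebra `G_A(½)` generated by `{0, ½, 1}`. -/
inductive GenH (half : α) : α → Prop
  | zero : GenH half MV.zero
  | half : GenH half half
  | one : GenH half MV.one
  | add : ∀ {x y : α}, GenH half x → GenH half y → GenH half (MV.add x y)
  | neg : ∀ {x : α}, GenH half x → GenH half (MV.neg x)
  | mul : ∀ {x y : α}, GenH half x → GenH half y → GenH half (PMV.mul x y)

/-- The `k`-fold `⊙`-power of `x` (`⊙₀ x = 1`). -/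
def odpow (x : α) : ℕ → α
  | 0 => MV.one
  | k + 1 => MV.odot (odpow x k) x

/-- `(¼ • u) ⊕ (¼ • v) ≤ s` for every dyadic `s ∈ G_A(½)` whose real value is at
least `(1+√2)/(4√2)` (here `¼ = ½ • ½`). -/
def Pbound (half u v : α) : Prop :=
  ∀ a n : ℕ, 1 ≤ n → a ≤ 2 ^ n →
    (1 + Real.sqrt 2) / (4 * Real.sqrt 2) ≤ (a : ℝ) / 2 ^ n →
    MV.le (MV.add (PMV.mul (PMV.mul half half) u) (PMV.mul (PMV.mul half half) v))
      (dy half a n)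

/-- `D_A ⊆ A × A`: the union of the four quadrant sets `Q1, Q2, Q3, Q4`. -/
def DA (half : α) : Set (α × α) :=
  {p | MV.le half p.1 ∧ MV.le half p.2 ∧ Pbound half p.1 p.2} ∪
  {p | MV.le p.1 half ∧ MV.le half p.2 ∧ Pbound half (MV.neg p.1) p.2} ∪
  {p | MV.le p.1 half ∧ MV.le p.2 half ∧ Pbound half (MV.neg p.1) (MV.neg p.2)} ∪
  {p | MV.le half p.1 ∧ MV.le p.2 half ∧ Pbound half p.1 (MV.neg p.2)}

/-- Axiom P2 for an element `p` of `S_A`, written out in the pair construction: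
`((¼ • p) ⊕ (¼ • √p)) → s = 1` for every dyadic `s` with real value `≥ (1+√2)/(4√2)`.
Since `√p = (p.2, ¬p.1)`, the first component of `(¼ • p) ⊕ (¼ • √p)` is
`(¼ • p.1) ⊕ (¼ • p.2)`. -/
def P2at (half : α) (p : α × α) : Prop :=
  ∀ a n : ℕ, 1 ≤ n → a ≤ 2 ^ n →
    (1 + Real.sqrt 2) / (4 * Real.sqrt 2) ≤ (a : ℝ) / 2 ^ n →
    (MV.add
        (MV.neg (MV.add (PMV.mul (PMV.mul half half) p.1)
          (PMV.mul (PMV.mul half half) p.2)))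
        (dy half a n),
      half) = ((MV.one : α), half)

section Aux
set_option linter.unusedSectionVars false

lemma mv_add_one (x : α) : MV.add x MV.one = MV.one := MV.add_top x

lemma mv_neg_one : MV.neg (MV.one : α) = MV.zero := MV.neg_neg MV.zero

lemma mv_zero_add (x : α) : MV.add MV.zero x = x := by
  rw [MV.add_comm, MV.add_zero]

lemma mv_neg_add_self (x : α) : MV.add (MV.neg x) x = MV.one := by
  have h := MV.luk x MV.one
  rw [mv_add_one, mv_neg_one, mv_zero_add] at h
  exact h.symm

lemma mv_le_refl (x : α) : MV.le x x := mv_neg_add_self x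

lemma mv_le_iff_ex {x y : α} : MV.le x y ↔ ∃ c, y = MV.add x c := by
  constructor
  · intro hxy
    refine ⟨MV.neg (MV.add (MV.neg y) x), ?_⟩
    have h := MV.luk x y
    rw [show MV.add (MV.neg x) y = MV.one from hxy, mv_neg_one, mv_zero_add] at h
    exact h.trans (MV.add_comm _ _)
  · rintro ⟨c, rfl⟩
    show MV.add (MV.neg x) (MV.add x c) = MV.one
    rw [MV.add_assoc, mv_neg_add_self, MV.add_comm, mv_add_one]

lemma mv_le_trans {x y z : α} (hxy : MV.le x y) (hyz : MV.le y z) : MV.le x z := by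
  rcases mv_le_iff_ex.mp hxy with ⟨c, rfl⟩
  rcases mv_le_iff_ex.mp hyz with ⟨d, rfl⟩
  exact mv_le_iff_ex.mpr ⟨MV.add c d, by rw [MV.add_assoc]⟩

lemma mv_add_le_add {x y x' y' : α} (hx : MV.le x x') (hy : MV.le y y') :
    MV.le (MV.add x y) (MV.add x' y') := by
  rcases mv_le_iff_ex.mp hx with ⟨c, rfl⟩
  rcases mv_le_iff_ex.mp hy with ⟨d, rfl⟩
  refine mv_le_iff_ex.mpr ⟨MV.add c d, ?_⟩
  rw [← MV.add_assoc, ← MV.add_assoc]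
  congr 1
  rw [MV.add_assoc, MV.add_assoc, MV.add_comm c y]

lemma mv_neg_le_neg {x y : α} (hxy : MV.le x y) : MV.le (MV.neg y) (MV.neg x) := by
  show MV.add (MV.neg (MV.neg y)) (MV.neg x) = MV.one
  rw [MV.neg_neg, MV.add_comm]
  exact hxy

lemma pmv_mul_zero (c : α) : PMV.mul c MV.zero = MV.zero := by
  have h := PMV.mul_distrib c MV.one MV.one
  rw [PMV.mul_one] at h
  unfold MV.odot at h
  simp only [mv_zero_add, MV.neg_neg, mv_neg_add_self, mv_neg_one] at h
  exact h

lemma pmv_mul_le_mul (c : α) {x y : α} (hxy : MV.le x y) :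
    MV.le (PMV.mul c x) (PMV.mul c y) := by
  have h := PMV.mul_distrib c x y
  unfold MV.odot at h
  rw [show MV.add (MV.neg x) (MV.neg (MV.neg y)) = MV.one by rw [MV.neg_neg]; exact hxy,
    mv_neg_one, pmv_mul_zero] at h
  have h2 := congrArg MV.neg h.symm
  rw [MV.neg_neg, MV.neg_neg] at h2
  exact h2

lemma pbound_mono {half u v u' v' : α} (hu : MV.le u u') (hv : MV.le v v')
    (hp : Pbound half u' v') : Pbound half u v := by
  intro a n h1 h2 h3
  exact mv_le_trans
    (mv_add_le_add (pmv_mul_le_mul _ hu) (pmv_mul_le_mul _ hv)) (hp a n h1 h2 h3)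

lemma pbound_symm {half u v : α} (hp : Pbound half u v) : Pbound half v u := by
  intro a n h1 h2 h3
  have := hp a n h1 h2 h3
  unfold MV.le at this ⊢
  rw [MV.add_comm (PMV.mul _ v)]
  exact this

lemma p2at_iff_pbound (half : α) (p : α × α) :
    P2at half p ↔ Pbound half p.1 p.2 := by
  unfold P2at Pbound MV.le
  constructor <;> intro h a n h1 h2 h3 <;> have := h a n h1 h2 h3
  · exact (Prod.mk.injEq _ _ _ _).mp this |>.1
  · rw [this]

lemma mv_le_neg_self {half x : α} (hh : MV.neg half = half) (hx : MV.le x half) :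
    MV.le x (MV.neg x) :=
  mv_le_trans hx (hh ▸ mv_neg_le_neg hx)

lemma mv_neg_le_self {half x : α} (hh : MV.neg half = half) (hx : MV.le half x) :
    MV.le (MV.neg x) x :=
  mv_le_trans (hh ▸ mv_neg_le_neg hx) hx

end Aux

/-- For a totally ordered PMV_{1/2}-algebra `A`, `D_A` is the largest irreversible
Poincaré subalgebra of `S_A`: it satisfies axiom P2, and every subalgebra of `S_A`
satisfying P2 is contained in `D_A`. -/
theorem DA_largest_poincare (half : α) (h : IsPMVHalf half)
    (htot : ∀ x y : α, MV.le x y ∨ MV.le y x) :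
    (∀ p : α × α, p ∈ DA half → P2at half p) ∧
    (∀ B : Set (α × α),
      ((MV.zero : α), half) ∈ B →
      (half, half) ∈ B →
      ((MV.one : α), half) ∈ B →
      (∀ p q : α × α, p ∈ B → q ∈ B → (MV.add p.1 q.1, half) ∈ B) →
      (∀ p q : α × α, p ∈ B → q ∈ B → (PMV.mul p.1 q.1, half) ∈ B) →
      (∀ p : α × α, p ∈ B → (MV.neg p.1, MV.neg p.2) ∈ B) →
      (∀ p : α × α, p ∈ B → (p.2, MV.neg p.1) ∈ B) →
      (∀ p : α × α, p ∈ B → P2at half p) →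
      B ⊆ DA half) := by
  constructor
  · intro p hp
    rw [p2at_iff_pbound]
    rcases hp with ((q1 | q2) | q3) | q4
    · exact q1.2.2
    · exact pbound_mono (mv_le_neg_self h.neg_half q2.1) (mv_le_refl _) q2.2.2
    · exact pbound_mono (mv_le_neg_self h.neg_half q3.1)
        (mv_le_neg_self h.neg_half q3.2.1) q3.2.2
    · exact pbound_mono (mv_le_refl _) (mv_le_neg_self h.neg_half q4.2.1) q4.2.2
  · intro B hz hhf ho hadd hmul hneg hsqrt hP2 p hp
    have hsp : ((p.2, MV.neg p.1) : α × α) ∈ B := hsqrt p hp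
    have hssp : ((MV.neg p.1, MV.neg p.2) : α × α) ∈ B := hsqrt _ hsp
    have hsssp : ((MV.neg p.2, MV.neg (MV.neg p.1)) : α × α) ∈ B := hsqrt _ hssp
    have pb1 : Pbound half p.1 p.2 := (p2at_iff_pbound half p).mp (hP2 p hp)
    have pb2 : Pbound half p.2 (MV.neg p.1) :=
      (p2at_iff_pbound half _).mp (hP2 _ hsp)
    have pb3 : Pbound half (MV.neg p.1) (MV.neg p.2) :=
      (p2at_iff_pbound half _).mp (hP2 _ hssp)
    have pb4 : Pbound half (MV.neg p.2) p.1 := by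
      have := (p2at_iff_pbound half _).mp (hP2 _ hsssp)
      rwa [MV.neg_neg] at this
    rcases htot p.1 half with c1 | c1 <;> rcases htot p.2 half with c2 | c2
    · -- p.1 ≤ half, p.2 ≤ half : Q3
      exact Or.inl (Or.inr ⟨c1, c2, pb3⟩)
    · -- p.1 ≤ half, half ≤ p.2 : Q2
      exact Or.inl (Or.inl (Or.inr ⟨c1, c2, pbound_symm pb2⟩))
    · -- half ≤ p.1, p.2 ≤ half : Q4
      exact Or.inr ⟨c1, c2, pbound_symm pb4⟩
    · -- half ≤ p.1, half ≤ p.2 : Q1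
      exact Or.inl (Or.inl (Or.inl ⟨c1, c2, pb1⟩))
end

section
/- Let t be a term in the signature (⊕, •, ¬, √, 0, ½, 1). Suppose the identity t = 1 holds in every algebra S_A arising from the pair construction over a totally ordered PMV-algebra A with ¬½ = ½. Then t = 1 holds in every √qPMV-algebra. -/
/-- Terms in the signature `(⊕, •, ¬, √, 0, ½, 1)`. -/
inductive Trm where
  | var : ℕ → Trm
  | zero : Trm
  | half : Trm
  | one : Trm
  | neg : Trm → Trm
  | sqrt : Trm → Trm
  | add : Trm → Trm → Trm
  | mul : Trm → Trm → Trm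

/-- `hasAddSub t` holds iff `t` contains a subterm of the form `s₁ ⊕ s₂`. -/
def hasAddSub : Trm → Prop
  | .var _ => False
  | .zero => False
  | .half => False
  | .one => False
  | .neg t => hasAddSub t
  | .sqrt t => hasAddSub t
  | .add _ _ => True
  | .mul s t => hasAddSub s ∨ hasAddSub t

/-- Evaluation of a term in a √qPMV-algebra under an assignment of the variables. -/
def ev {α : Type*} [QMV α] [SQPMV α] (v : ℕ → α) : Trm → α
  | .var n => v n
  | .zero => QMV.zero
  | .half => SQPMV.half
  | .one => QMV.one
  | .neg t => QMV.neg (ev v t)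
  | .sqrt t => SQPMV.sqrt (ev v t)
  | .add s t => QMV.add (ev v s) (ev v t)
  | .mul s t => SQPMV.mul (ev v s) (ev v t)

/-- Evaluation of a term in the pair construction `S_A` over a PMV-algebra `A`
with distinguished element `half`. -/
def evP {A : Type*} [MV A] [PMV A] (half : A) (v : ℕ → A × A) : Trm → A × A
  | .var n => v n
  | .zero => (MV.zero, half)
  | .half => (half, half)
  | .one => (MV.one, half)
  | .neg t => (MV.neg (evP half v t).1, MV.neg (evP half v t).2)
  | .sqrt t => ((evP half v t).2, MV.neg (evP half v t).1)
  | .add s t => (MV.add (evP half v s).1 (evP half v t).1, half)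
  | .mul s t => (PMV.mul (evP half v s).1 (evP half v t).1, half)

universe u

/-!
The map `x ↦ (x ⊕ 0, √x ⊕ 0)` is a homomorphism from a √qPMV-algebra `B` into `S_R`, where `R`
is the PMV-algebra of regular elements (`x ⊕ 0 = x`) of `B`; on `R` the operation `⊕` is
commutative. An identity valid in `S_A` for every PMV-chain `A` holds in every `S_A`, since each
PMV-algebra is a subdirect product of its quotients by prime ideals, which are chains. So both
sides of `t = 1` have the same image in `S_R`.

The map loses information only on terms built from one variable by `¬` and `√`, and such terms
already fail in `S_A` for `A = ℚ ∩ [0, 1]`. Every other term evaluates to `r` or `√r` with `r`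
regular, and an element of that form is determined by its image.
-/

namespace MV

variable {A : Type*} [MV A]

local infixl:65 " ⊹ " => MV.add
local infix:50 " ≼ " => MV.le

def sub (x y : A) : A := neg (neg x ⊹ y)

local infixl:65 " ⊖ " => MV.sub

theorem le_iff {x y : A} : x ≼ y ↔ neg x ⊹ y = one := Iff.rfl

theorem inf_eq_sub_sub (x y : A) : inf x y = x ⊖ (x ⊖ y) := rfl

theorem odot_neg (x y : A) : odot x (neg y) = x ⊖ y := by
  rw [odot, sub, neg_neg]

theorem neg_one : neg (one : A) = zero := neg_neg zero

theorem add_one (x : A) : x ⊹ one = one := add_top x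

theorem one_add (x : A) : one ⊹ x = one := by rw [add_comm, add_one]

theorem zero_add (x : A) : zero ⊹ x = x := by rw [add_comm, add_zero]

theorem neg_add_self (x : A) : neg x ⊹ x = one := by
  simpa only [neg_one, zero_add, add_one] using luk one x

theorem add_neg_self (x : A) : x ⊹ neg x = one := by rw [add_comm, neg_add_self]

theorem neg_sub (x y : A) : neg (x ⊖ y) = neg x ⊹ y := neg_neg _

theorem sub_self (x : A) : x ⊖ x = zero := by rw [sub, neg_add_self, neg_one]

theorem neg_sub_neg (x y : A) : neg x ⊖ neg y = y ⊖ x := by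
  rw [sub, sub, neg_neg, add_comm]

theorem le_refl (x : A) : x ≼ x := neg_add_self x

theorem zero_le (x : A) : zero ≼ x := one_add x

theorem le_antisymm {x y : A} (hxy : x ≼ y) (hyx : y ≼ x) : x = y := by
  have h := luk x y
  rwa [le_iff.mp hxy, le_iff.mp hyx, neg_one, zero_add, zero_add, eq_comm] at h

theorem sub_add_cancel_of_le {x y : A} (h : x ≼ y) : y ⊖ x ⊹ x = y := by
  rw [sub, luk, le_iff.mp h, neg_one, zero_add]

theorem le_add_left (x w : A) : x ≼ w ⊹ x := by
  rw [le_iff, add_comm w, add_assoc, neg_add_self, one_add]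

theorem le_add_right (x w : A) : x ≼ x ⊹ w := by
  rw [add_comm]; exact le_add_left x w

theorem le_trans {x y z : A} (hxy : x ≼ y) (hyz : y ≼ z) : x ≼ z := by
  have hz : z = z ⊖ y ⊹ (y ⊖ x ⊹ x) := by
    rw [sub_add_cancel_of_le hxy, sub_add_cancel_of_le hyz]
  rw [hz, add_assoc]
  exact le_add_left x _

theorem add_le_add_right {a b : A} (c : A) (h : a ≼ b) : a ⊹ c ≼ b ⊹ c := by
  rw [← sub_add_cancel_of_le h, ← add_assoc]
  exact le_add_left _ _

theorem add_le_add_left {a b : A} (c : A) (h : a ≼ b) : c ⊹ a ≼ c ⊹ b := by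
  rw [add_comm c a, add_comm c b]; exact add_le_add_right c h

theorem add_le_add {a b c d : A} (hab : a ≼ b) (hcd : c ≼ d) : a ⊹ c ≼ b ⊹ d :=
  le_trans (add_le_add_right c hab) (add_le_add_left b hcd)

theorem sub_le_iff_le_add {x y z : A} : x ⊖ y ≼ z ↔ x ≼ y ⊹ z := by
  rw [le_iff, le_iff, neg_sub, add_assoc]

theorem le_sub_add (x y : A) : x ≼ x ⊖ y ⊹ y := by
  rw [add_comm]; exact sub_le_iff_le_add.mp (le_refl _)

theorem sub_le_sub_left (x : A) {c d : A} (h : c ≼ d) : x ⊖ d ≼ x ⊖ c := by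
  rw [sub_le_iff_le_add, add_comm d]
  exact le_trans (le_sub_add x c) (add_le_add_left _ h)

theorem sub_le_sub_add_sub (x y z : A) : x ⊖ z ≼ x ⊖ y ⊹ (y ⊖ z) := by
  rw [sub_le_iff_le_add, add_comm z, ← add_assoc]
  exact le_trans (le_sub_add x y) (add_le_add_left _ (le_sub_add y z))

theorem add_sub_add_le (x y a : A) : x ⊹ a ⊖ (y ⊹ a) ≼ x ⊖ y := by
  rw [sub_le_iff_le_add, add_comm (y ⊹ a), add_assoc]
  exact add_le_add_right a (le_sub_add x y)

theorem sub_eq_zero_iff_le {x y : A} : x ⊖ y = zero ↔ x ≼ y := by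
  rw [sub, ← neg_one, le_iff]
  exact ⟨fun h => by simpa only [neg_neg] using congrArg neg h, fun h => by rw [h]⟩

theorem le_zero_iff {x : A} : x ≼ zero ↔ x = zero :=
  ⟨fun h => le_antisymm h (zero_le x), fun h => h ▸ le_refl _⟩

theorem neg_le_neg {x y : A} (h : x ≼ y) : neg y ≼ neg x := by
  rw [le_iff, neg_neg, ← sub_add_cancel_of_le h, ← add_assoc, add_neg_self, add_one]

theorem sub_sub_cancel_of_le {x y : A} (h : y ≼ x) : x ⊖ (x ⊖ y) = y := by
  have key : neg x ⊹ neg (neg x ⊹ y) = neg y := by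
    have h' := luk (neg y) (neg x)
    rw [neg_neg, neg_neg, add_comm x, le_iff.mp h, neg_one, zero_add] at h'
    rw [add_comm, add_comm (neg x) y, h']
  rw [sub, sub, key, neg_neg]

theorem inf_le_left (x y : A) : inf x y ≼ x := by
  rw [le_iff, inf_eq_sub_sub, neg_sub, add_comm (neg x), ← add_assoc, neg_add_self, add_one]

theorem inf_le_right (x y : A) : inf x y ≼ y := by
  rw [le_iff, inf_eq_sub_sub, neg_sub, ← add_assoc, sub, luk, add_assoc,
    add_comm (neg x), ← add_assoc, neg_add_self, add_one]

theorem le_inf {x y z : A} (hx : z ≼ x) (hy : z ≼ y) : z ≼ inf x y := by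
  rw [inf_eq_sub_sub, ← sub_sub_cancel_of_le hx]
  exact sub_le_sub_left x (sub_le_sub_left x hy)

theorem inf_comm (x y : A) : inf x y = inf y x :=
  le_antisymm (le_inf (inf_le_right x y) (inf_le_left x y))
    (le_inf (inf_le_right y x) (inf_le_left y x))

theorem add_inf (x y z : A) : x ⊹ inf y z = inf (x ⊹ y) (x ⊹ z) := by
  refine le_antisymm (le_inf (add_le_add_left x (inf_le_left y z))
    (add_le_add_left x (inf_le_right y z))) ?_
  rw [← sub_le_iff_le_add]
  exact le_inf (sub_le_iff_le_add.mpr (inf_le_left _ _)) (sub_le_iff_le_add.mpr (inf_le_right _ _))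

theorem add_add_add_comm (a b c d : A) : a ⊹ b ⊹ (c ⊹ d) = a ⊹ c ⊹ (b ⊹ d) := by
  rw [← add_assoc, add_assoc b c d, add_comm b c, ← add_assoc c b d, add_assoc]

theorem sub_inf (x y : A) : x ⊖ inf x y = x ⊖ y := by
  refine le_antisymm ?_ (sub_le_sub_left x (inf_le_right x y))
  rw [sub_le_iff_le_add, add_comm, add_inf]
  exact le_inf (le_add_left x _) (le_sub_add x y)

theorem add_sub_cancel_of_le_neg {x y : A} (h : x ≼ neg y) : x ⊹ y ⊖ y = x := by
  have hy : y ≼ neg x := by simpa only [neg_neg] using neg_le_neg h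
  have e : neg (x ⊹ y) = neg x ⊖ y := by rw [sub, neg_neg]
  rw [sub, e, sub_add_cancel_of_le hy, neg_neg]

theorem inf_sub_sub_eq_zero (x y : A) : inf (x ⊖ y) (y ⊖ x) = zero := by
  have hx : inf x y ⊹ (x ⊖ y) = x := by
    rw [← sub_inf, add_comm]; exact sub_add_cancel_of_le (inf_le_left x y)
  have hy : inf x y ⊹ (y ⊖ x) = y := by
    rw [← sub_inf y x, inf_comm y x, add_comm]; exact sub_add_cancel_of_le (inf_le_right x y)
  have hle : inf (x ⊖ y) (y ⊖ x) ≼ neg (inf x y) := by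
    refine le_trans (inf_le_left _ _) ?_
    rw [← sub_inf]
    exact neg_le_neg (le_add_left (inf x y) (neg x))
  have hcancel := add_sub_cancel_of_le_neg hle
  rwa [add_comm, add_inf, hx, hy, sub_self, eq_comm] at hcancel

theorem add_inf_eq_zero {x y z : A} (hx : inf x z = zero) (hy : inf y z = zero) :
    inf (x ⊹ y) z = zero := by
  have hle : inf (x ⊹ y) z ≼ inf (y ⊹ x) (y ⊹ z) :=
    le_inf (by rw [add_comm y x]; exact inf_le_left _ _)
      (le_trans (inf_le_right _ _) (le_add_left z y))
  rw [← add_inf, hx, add_zero] at hle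
  simpa only [hy, le_zero_iff] using le_inf hle (inf_le_right (x ⊹ y) z)

def nsmul : ℕ → A → A
  | 0, _ => zero
  | n + 1, a => a ⊹ nsmul n a

theorem nsmul_add (a : A) (m n : ℕ) : nsmul (m + n) a = nsmul m a ⊹ nsmul n a := by
  induction m with
  | zero => rw [Nat.zero_add, nsmul, zero_add]
  | succ m ih => rw [Nat.succ_add, nsmul, nsmul, ih, add_assoc]

theorem nsmul_inf_eq_zero {a b : A} (h : inf a b = zero) : ∀ n, inf (nsmul n a) b = zero
  | 0 => le_zero_iff.mp (inf_le_left zero b)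
  | n + 1 => add_inf_eq_zero h (nsmul_inf_eq_zero h n)

theorem nsmul_inf_nsmul_eq_zero {a b : A} (h : inf a b = zero) (m n : ℕ) :
    inf (nsmul m a) (nsmul n b) = zero := by
  have hm : inf b (nsmul m a) = zero := by rw [inf_comm]; exact nsmul_inf_eq_zero h m
  rw [inf_comm]
  exact nsmul_inf_eq_zero hm n

section Product

variable [PMV A]

theorem mul_sub (x y z : A) : PMV.mul x (y ⊖ z) = PMV.mul x y ⊖ PMV.mul x z := by
  rw [← odot_neg, ← odot_neg, PMV.mul_distrib]

theorem mul_zero (x : A) : PMV.mul x zero = zero := by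
  conv_lhs => rw [← sub_self one]
  rw [mul_sub, sub_self]

theorem mul_le_right (x y : A) : PMV.mul x y ≼ y := by
  have h := congrArg (PMV.mul y) (sub_eq_zero_iff_le.mpr (add_one (neg x)))
  rwa [mul_sub, PMV.mul_one, mul_zero, sub_eq_zero_iff_le, PMV.mul_comm] at h

theorem sub_mul (x y a : A) : PMV.mul x a ⊖ PMV.mul y a = PMV.mul a (x ⊖ y) := by
  rw [PMV.mul_comm x a, PMV.mul_comm y a, mul_sub]

end Product

structure IsIdeal (I : Set A) : Prop where
  zero_mem : zero ∈ I
  add_mem {x y : A} : x ∈ I → y ∈ I → x ⊹ y ∈ I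
  mem_of_le {x y : A} : x ≼ y → y ∈ I → x ∈ I

def IsPrime (I : Set A) : Prop := ∀ x y : A, x ⊖ y ∈ I ∨ y ⊖ x ∈ I

def idealAdjoin (I : Set A) (a : A) : Set A := {x | ∃ m ∈ I, ∃ n, x ≼ m ⊹ nsmul n a}

theorem subset_idealAdjoin (I : Set A) (a : A) : I ⊆ idealAdjoin I a :=
  fun x hx => ⟨x, hx, 0, le_add_right x _⟩

theorem IsIdeal.mem_idealAdjoin_self {I : Set A} (hI : IsIdeal I) (a : A) :
    a ∈ idealAdjoin I a :=
  ⟨zero, hI.zero_mem, 1, by rw [zero_add, nsmul, nsmul, add_zero]; exact le_refl a⟩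

theorem IsIdeal.idealAdjoin {I : Set A} (hI : IsIdeal I) (a : A) : IsIdeal (idealAdjoin I a) where
  zero_mem := ⟨zero, hI.zero_mem, 0, zero_le _⟩
  add_mem := by
    rintro x y ⟨m₁, hm₁, n₁, hx⟩ ⟨m₂, hm₂, n₂, hy⟩
    refine ⟨m₁ ⊹ m₂, hI.add_mem hm₁ hm₂, n₁ + n₂, ?_⟩
    have e : m₁ ⊹ nsmul n₁ a ⊹ (m₂ ⊹ nsmul n₂ a) = m₁ ⊹ m₂ ⊹ nsmul (n₁ + n₂) a := by
      rw [nsmul_add, add_add_add_comm]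
    exact e ▸ add_le_add hx hy
  mem_of_le := by
    rintro x y hxy ⟨m, hm, n, hy⟩
    exact ⟨m, hm, n, le_trans hxy hy⟩

theorem isIdeal_singleton_zero : IsIdeal ({zero} : Set A) where
  zero_mem := rfl
  add_mem hx hy := by rw [Set.mem_singleton_iff] at hx hy ⊢; rw [hx, hy, add_zero]
  mem_of_le hxy hy := by rw [Set.mem_singleton_iff] at hy ⊢; exact le_zero_iff.mp (hy ▸ hxy)

theorem exists_maximal_ideal_not_mem {z : A} (hz : z ≠ zero) :
    ∃ M : Set A, Maximal (fun I => IsIdeal I ∧ z ∉ I) M := by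
  obtain ⟨M, -, hM⟩ := zorn_subset_nonempty {I : Set A | IsIdeal I ∧ z ∉ I}
    (fun c hc hchain ⟨I₀, hI₀⟩ => by
      refine ⟨⋃₀ c, ⟨⟨⟨I₀, hI₀, (hc hI₀).1.zero_mem⟩, ?_, ?_⟩, ?_⟩,
        fun I hI => Set.subset_sUnion_of_mem hI⟩
      · rintro x y ⟨I₁, hI₁, hx⟩ ⟨I₂, hI₂, hy⟩
        rcases hchain.total hI₁ hI₂ with h | h
        · exact ⟨I₂, hI₂, (hc hI₂).1.add_mem (h hx) hy⟩
        · exact ⟨I₁, hI₁, (hc hI₁).1.add_mem hx (h hy)⟩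
      · rintro x y hxy ⟨I₁, hI₁, hy⟩
        exact ⟨I₁, hI₁, (hc hI₁).1.mem_of_le hxy hy⟩
      · rintro ⟨I₁, hI₁, hzI⟩
        exact (hc hI₁).2 hzI)
    {zero} ⟨isIdeal_singleton_zero, by simpa using hz⟩
  exact ⟨M, hM⟩

/-- If neither `x ⊖ y` nor `y ⊖ x` lay in `M`, maximality would put `z` below both
`m ⊕ n(x ⊖ y)` and `m ⊕ n(y ⊖ x)`, whose meet is `m` because `x ⊖ y` and `y ⊖ x` are
disjoint. -/
theorem isPrime_of_maximal {z : A} {M : Set A} (hM : Maximal (fun I => IsIdeal I ∧ z ∉ I) M) :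
    IsPrime M := by
  obtain ⟨⟨hMI, hzM⟩, hmax⟩ := hM
  have hgen : ∀ w ∉ M, ∃ m ∈ M, ∃ n, z ≼ m ⊹ nsmul n w := by
    intro w hw
    by_contra hzw
    exact hw (hmax ⟨hMI.idealAdjoin w, hzw⟩ (subset_idealAdjoin M w) (hMI.mem_idealAdjoin_self w))
  intro x y
  by_contra! hxy
  obtain ⟨m₁, hm₁, n₁, h₁⟩ := hgen _ hxy.1
  obtain ⟨m₂, hm₂, n₂, h₂⟩ := hgen _ hxy.2
  have hz : z ≼ inf (m₁ ⊹ m₂ ⊹ nsmul n₁ (x ⊖ y)) (m₁ ⊹ m₂ ⊹ nsmul n₂ (y ⊖ x)) :=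
    le_inf (le_trans h₁ (add_le_add_right _ (le_add_right m₁ m₂)))
      (le_trans h₂ (add_le_add_right _ (le_add_left m₂ m₁)))
  rw [← add_inf, nsmul_inf_nsmul_eq_zero (inf_sub_sub_eq_zero x y), add_zero] at hz
  exact hzM (hMI.mem_of_le hz (hMI.add_mem hm₁ hm₂))

theorem exists_isPrime_not_mem {z : A} (hz : z ≠ zero) :
    ∃ M : Set A, IsIdeal M ∧ IsPrime M ∧ z ∉ M := by
  obtain ⟨M, hM⟩ := exists_maximal_ideal_not_mem hz
  exact ⟨M, hM.prop.1, isPrime_of_maximal hM, hM.prop.2⟩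

section Quotient

variable {M : Set A}

def idealSetoid (hM : IsIdeal M) : Setoid A where
  r x y := x ⊖ y ∈ M ∧ y ⊖ x ∈ M
  iseqv :=
    { refl := fun x => by rw [sub_self]; exact ⟨hM.zero_mem, hM.zero_mem⟩
      symm := fun h => ⟨h.2, h.1⟩
      trans := fun {x y z} hxy hyz =>
        ⟨hM.mem_of_le (sub_le_sub_add_sub x y z) (hM.add_mem hxy.1 hyz.1),
          hM.mem_of_le (sub_le_sub_add_sub z y x) (hM.add_mem hyz.2 hxy.2)⟩ }

theorem IsIdeal.sub_add_sub_mem (hM : IsIdeal M) {x y u w : A} (hxy : x ⊖ y ∈ M)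
    (huw : u ⊖ w ∈ M) : x ⊹ u ⊖ (y ⊹ w) ∈ M := by
  have h : x ⊹ u ⊖ (y ⊹ w) ≼ x ⊖ y ⊹ (u ⊖ w) := by
    refine le_trans (sub_le_sub_add_sub _ (y ⊹ u) _) (add_le_add (add_sub_add_le x y u) ?_)
    rw [add_comm y u, add_comm y w]
    exact add_sub_add_le u w y
  exact hM.mem_of_le h (hM.add_mem hxy huw)

theorem IsIdeal.sub_mul_mem [PMV A] (hM : IsIdeal M) {x y : A} (a : A) (hxy : x ⊖ y ∈ M) :
    PMV.mul x a ⊖ PMV.mul y a ∈ M := by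
  rw [sub_mul]
  exact hM.mem_of_le (mul_le_right a _) hxy

def IdealQuotient (hM : IsIdeal M) : Type _ := Quotient (idealSetoid hM)

def IdealQuotient.mk (hM : IsIdeal M) : A → IdealQuotient hM := Quotient.mk (idealSetoid hM)

instance (hM : IsIdeal M) : MV (IdealQuotient hM) where
  add := Quotient.map₂ add fun _ _ hab _ _ hcd =>
    ⟨hM.sub_add_sub_mem hab.1 hcd.1, hM.sub_add_sub_mem hab.2 hcd.2⟩
  neg := Quotient.map neg fun x y hxy => by
    show neg x ⊖ neg y ∈ M ∧ neg y ⊖ neg x ∈ M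
    rw [neg_sub_neg, neg_sub_neg]; exact hxy.symm
  zero := IdealQuotient.mk hM zero
  add_assoc x y z := Quotient.inductionOn₃ x y z fun a b c => congrArg _ (add_assoc a b c)
  add_comm x y := Quotient.inductionOn₂ x y fun a b => congrArg _ (add_comm a b)
  add_zero x := Quotient.inductionOn x fun a => congrArg _ (add_zero a)
  neg_neg x := Quotient.inductionOn x fun a => congrArg _ (neg_neg a)
  add_top x := Quotient.inductionOn x fun a => congrArg _ (add_top a)
  luk x y := Quotient.inductionOn₂ x y fun a b => congrArg _ (luk a b)

instance [PMV A] (hM : IsIdeal M) : PMV (IdealQuotient hM) where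
  mul := Quotient.map₂ PMV.mul fun a b hab c d hcd =>
    (idealSetoid hM).trans
      ⟨hM.sub_mul_mem c hab.1, hM.sub_mul_mem c hab.2⟩
      (by rw [PMV.mul_comm b c, PMV.mul_comm b d]
          exact ⟨hM.sub_mul_mem b hcd.1, hM.sub_mul_mem b hcd.2⟩)
  mul_comm x y := Quotient.inductionOn₂ x y fun a b => congrArg _ (PMV.mul_comm a b)
  mul_assoc x y z := Quotient.inductionOn₃ x y z fun a b c => congrArg _ (PMV.mul_assoc a b c)
  mul_one x := Quotient.inductionOn x fun a => congrArg _ (PMV.mul_one a)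
  mul_distrib x y z :=
    Quotient.inductionOn₃ x y z fun a b c => congrArg _ (PMV.mul_distrib a b c)

theorem IdealQuotient.mk_le_mk (hM : IsIdeal M) {x y : A} (h : x ⊖ y ∈ M) :
    IdealQuotient.mk hM x ≼ IdealQuotient.mk hM y := by
  refine Quotient.sound (show neg x ⊹ y ⊖ one ∈ M ∧ one ⊖ (neg x ⊹ y) ∈ M from ⟨?_, ?_⟩)
  · rw [sub, add_one, neg_one]; exact hM.zero_mem
  · rw [sub, neg_one, zero_add]; exact h

theorem IdealQuotient.le_total {hM : IsIdeal M} (hP : IsPrime M) (x y : IdealQuotient hM) :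
    x ≼ y ∨ y ≼ x :=
  Quotient.inductionOn₂ x y fun a b => (hP a b).imp (mk_le_mk hM) (mk_le_mk hM)

theorem eq_of_forall_isPrime {x y : A}
    (h : ∀ (M : Set A) (hM : IsIdeal M), IsPrime M →
      IdealQuotient.mk hM x = IdealQuotient.mk hM y) :
    x = y := by
  by_contra hne
  have hsub : x ⊖ y ≠ zero ∨ y ⊖ x ≠ zero := by
    by_contra! h'
    exact hne (le_antisymm (sub_eq_zero_iff_le.mp h'.1) (sub_eq_zero_iff_le.mp h'.2))
  rcases hsub with hz | hz <;> obtain ⟨M, hM, hP, hzM⟩ := exists_isPrime_not_mem hz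
  · exact hzM (Quotient.exact (h M hM hP)).1
  · exact hzM (Quotient.exact (h M hM hP)).2

end Quotient

end MV

theorem evP_map {A B : Type*} [MV A] [PMV A] [MV B] [PMV B] (g : A → B)
    (map_add : ∀ x y, g (MV.add x y) = MV.add (g x) (g y))
    (map_neg : ∀ x, g (MV.neg x) = MV.neg (g x)) (map_zero : g MV.zero = MV.zero)
    (map_mul : ∀ x y, g (PMV.mul x y) = PMV.mul (g x) (g y))
    (half : A) (v : ℕ → A × A) (t : Trm) :
    evP (g half) (Prod.map g g ∘ v) t = Prod.map g g (evP half v t) := by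
  induction t with
  | var n => rfl
  | zero => simp [evP, map_zero]
  | half => rfl
  | one => simp [evP, MV.one, map_neg, map_zero]
  | neg t ih => simp [evP, ih, map_neg]
  | sqrt t ih => simp [evP, ih, map_neg]
  | add s t ihs iht => simp [evP, ihs, iht, map_add]
  | mul s t ihs iht => simp [evP, ihs, iht, map_mul]

theorem evP_eq_of_forall_chains {t : Trm}
    (h : ∀ (A : Type u) [MV A] [PMV A] (half : A), MV.neg half = half →
      (∀ x y : A, MV.le x y ∨ MV.le y x) →
      ∀ v : ℕ → A × A, evP half v t = ((MV.one : A), half))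
    {A : Type u} [MV A] [PMV A] {half : A} (hhalf : MV.neg half = half) (v : ℕ → A × A) :
    evP half v t = ((MV.one : A), half) := by
  have hquot : ∀ (M : Set A) (hM : MV.IsIdeal M), MV.IsPrime M →
      Prod.map (MV.IdealQuotient.mk hM) (MV.IdealQuotient.mk hM) (evP half v t) =
        Prod.map (MV.IdealQuotient.mk hM) (MV.IdealQuotient.mk hM) (MV.one, half) := by
    intro M hM hP
    rw [← evP_map (MV.IdealQuotient.mk hM) (fun _ _ => rfl) (fun _ => rfl) rfl (fun _ _ => rfl)]
    exact h _ _ (congrArg (MV.IdealQuotient.mk hM) hhalf) (MV.IdealQuotient.le_total hP) _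
  exact Prod.ext (MV.eq_of_forall_isPrime fun M hM hP => congrArg Prod.fst (hquot M hM hP))
    (MV.eq_of_forall_isPrime fun M hM hP => congrArg Prod.snd (hquot M hM hP))

section UnitInterval

open Set

variable {R : Type*} [CommRing R] [LinearOrder R] [IsStrictOrderedRing R]

instance : MV (Icc (0 : R) 1) where
  add x y := ⟨min (x + y) 1, le_min (add_nonneg x.2.1 y.2.1) zero_le_one, min_le_right _ _⟩
  neg x := ⟨1 - x, Icc.one_sub_mem x.2⟩
  zero := 0
  add_assoc x y z := Subtype.ext <| by
    show min ((x : R) + min ((y : R) + z) 1) 1 = min (min ((x : R) + y) 1 + z) 1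
    have hx := x.2.1; have hy := y.2.1; have hz := z.2.1
    simp only [min_def]; split_ifs <;> linarith
  add_comm x y := Subtype.ext <| by simp only [add_comm (x : R)]
  add_zero x := Subtype.ext <| by simp [x.2.2]
  neg_neg x := Subtype.ext <| sub_sub_cancel 1 (x : R)
  add_top x := Subtype.ext <| by simp [x.2.1]
  luk x y := Subtype.ext <| by
    show min (1 - min (1 - (x : R) + y) 1 + y) 1 = min (1 - min (1 - (y : R) + x) 1 + x) 1
    obtain ⟨hx, hx'⟩ := x.2
    obtain ⟨hy, hy'⟩ := y.2
    simp only [min_def]; split_ifs <;> linarith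

theorem Icc.mvLe_iff {x y : Icc (0 : R) 1} : MV.le x y ↔ x ≤ y := by
  rw [MV.le_iff, ← Subtype.coe_inj]
  show min (1 - (x : R) + y) 1 = 1 - 0 ↔ _
  rw [sub_zero, min_eq_right_iff, ← Subtype.coe_le_coe]
  constructor <;> intro h <;> linarith

instance : PMV (Icc (0 : R) 1) where
  mul := (· * ·)
  mul_comm := mul_comm
  mul_assoc x y z := (mul_assoc x y z).symm
  mul_one x := Subtype.ext <| by
    show (x : R) * (1 - 0) = x
    rw [sub_zero, mul_one]
  mul_distrib x y z := Subtype.ext <| by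
    show (x : R) * (1 - min ((1 - (y : R)) + (1 - (1 - (z : R)))) 1)
        = 1 - min ((1 - (x : R) * y) + (1 - (1 - (x : R) * z))) 1
    rcases le_total (y : R) z with hyz | hyz
    · have := mul_le_mul_of_nonneg_left hyz x.2.1
      rw [min_eq_right (by linarith), min_eq_right (by linarith)]
      ring
    · have := mul_le_mul_of_nonneg_left hyz x.2.1
      rw [min_eq_left (by linarith), min_eq_left (by linarith)]
      ring

end UnitInterval

instance {α : Type*} [MV α] : MV (ULift α) where
  add x y := ⟨MV.add x.down y.down⟩
  neg x := ⟨MV.neg x.down⟩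
  zero := ⟨MV.zero⟩
  add_assoc x y z := congrArg ULift.up (MV.add_assoc x.down y.down z.down)
  add_comm x y := congrArg ULift.up (MV.add_comm x.down y.down)
  add_zero x := congrArg ULift.up (MV.add_zero x.down)
  neg_neg x := congrArg ULift.up (MV.neg_neg x.down)
  add_top x := congrArg ULift.up (MV.add_top x.down)
  luk x y := congrArg ULift.up (MV.luk x.down y.down)

instance {α : Type*} [MV α] [PMV α] : PMV (ULift α) where
  mul x y := ⟨PMV.mul x.down y.down⟩
  mul_comm x y := congrArg ULift.up (PMV.mul_comm x.down y.down)
  mul_assoc x y z := congrArg ULift.up (PMV.mul_assoc x.down y.down z.down)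
  mul_one x := congrArg ULift.up (PMV.mul_one x.down)
  mul_distrib x y z := congrArg ULift.up (PMV.mul_distrib x.down y.down z.down)

theorem ULift.mvLe_iff {α : Type*} [MV α] {x y : ULift α} : MV.le x y ↔ MV.le x.down y.down :=
  ULift.ext_iff

def Trm.IsUnaryOfVar : Trm → Prop
  | .var _ => True
  | .neg t => t.IsUnaryOfVar
  | .sqrt t => t.IsUnaryOfVar
  | _ => False

theorem evP_mem_of_isUnaryOfVar {A : Type*} [MV A] [PMV A] {S : Set A}
    (hS : ∀ x ∈ S, MV.neg x ∈ S) (half : A) {v : ℕ → A × A} (hv : ∀ n, (v n).1 ∈ S ∧ (v n).2 ∈ S)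
    {t : Trm} (ht : t.IsUnaryOfVar) : (evP half v t).1 ∈ S ∧ (evP half v t).2 ∈ S := by
  induction t with
  | var n => exact hv n
  | neg t ih => exact ⟨hS _ (ih ht).1, hS _ (ih ht).2⟩
  | sqrt t ih => exact ⟨(ih ht).2, hS _ (ih ht).1⟩
  | _ => exact ht.elim

/-- The identity fails in `S_A` for `A = ℚ ∩ [0, 1]`, all variables at `(0, 0)`: there the second
coordinate stays in `{0, 1}` and never reaches `½`. -/
theorem Trm.not_isUnaryOfVar {t : Trm}
    (h : ∀ (A : Type u) [MV A] [PMV A] (half : A), MV.neg half = half →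
      (∀ x y : A, MV.le x y ∨ MV.le y x) →
      ∀ v : ℕ → A × A, evP half v t = ((MV.one : A), half)) :
    ¬ t.IsUnaryOfVar := by
  intro ht
  let half : ULift.{u} (Set.Icc (0 : ℚ) 1) := ⟨⟨1 / 2, by norm_num, by norm_num⟩⟩
  have hhalf : MV.neg half = half := congrArg ULift.up <| Subtype.ext <| by
    show (1 : ℚ) - 1 / 2 = 1 / 2; norm_num
  have htotal (x y : ULift.{u} (Set.Icc (0 : ℚ) 1)) : MV.le x y ∨ MV.le y x := by
    simp only [ULift.mvLe_iff, Icc.mvLe_iff]; exact le_total _ _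
  have hmem := (evP_mem_of_isUnaryOfVar (S := {MV.zero, MV.one}) (v := fun _ => (MV.zero, MV.zero))
    (by rintro x (rfl | rfl); exacts [Or.inr rfl, Or.inl MV.neg_one]) half
    (fun _ => ⟨Or.inl rfl, Or.inl rfl⟩) ht).2
  rw [h _ half hhalf htotal] at hmem
  rcases hmem with h0 | h1
  · have : (1 / 2 : ℚ) = 0 := congrArg (fun w => (w.down : ℚ)) h0
    norm_num at this
  · have : (1 / 2 : ℚ) = 1 - 0 := congrArg (fun w => (w.down : ℚ)) h1
    norm_num at this

namespace QMV

variable {B : Type*} [QMV B]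

local infixl:65 " ⊹ " => QMV.add

def IsRegular (x : B) : Prop := x ⊹ zero = x

theorem neg_one : neg (one : B) = zero := by rw [← neg_zero, neg_neg]

theorem isRegular_add (x y : B) : IsRegular (x ⊹ y) := add_add_zero x y

theorem isRegular_one : IsRegular (one : B) := by
  have h := luk (one : B) zero
  rwa [add_one, neg_one, neg_add_zero, neg_zero, add_add_zero] at h

theorem IsRegular.neg {x : B} (hx : IsRegular x) : IsRegular (neg x) := by
  rw [IsRegular, ← neg_add_zero, hx]

theorem isRegular_zero : IsRegular (zero : B) := by
  simpa only [neg_one] using (isRegular_one (B := B)).neg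

theorem neg_zero_add_add_self (x : B) : neg (zero ⊹ x) ⊹ x = one := by
  have h := luk x (one : B)
  rwa [add_one, neg_one, eq_comm] at h

def Regular (B : Type*) [QMV B] : Type _ := {x : B // IsRegular x}

instance : QMV (Regular B) where
  add x y := ⟨x.1 ⊹ y.1, isRegular_add _ _⟩
  neg x := ⟨neg x.1, x.2.neg⟩
  zero := ⟨zero, isRegular_zero⟩
  one := ⟨one, isRegular_one⟩
  add_assoc x y z := Subtype.ext (add_assoc x.1 y.1 z.1)
  neg_neg x := Subtype.ext (neg_neg x.1)
  add_one x := Subtype.ext (add_one x.1)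
  luk x y := Subtype.ext (luk x.1 y.1)
  neg_add_zero x := Subtype.ext (neg_add_zero x.1)
  add_add_zero x y := Subtype.ext (add_add_zero x.1 y.1)
  neg_zero := Subtype.ext neg_zero

namespace Regular

theorem add_zero (x : Regular B) : x ⊹ zero = x := Subtype.ext x.2

theorem neg_one_add_add_self (x : Regular B) : neg (one ⊹ x) ⊹ x = x := by
  have h := luk x zero
  rwa [add_zero, add_zero, neg_neg, neg_zero, eq_comm] at h

theorem neg_add_self_eq_one_add (x : Regular B) : neg x ⊹ x = one ⊹ x := by
  have h₁ : neg x ⊹ (one ⊹ x) = one ⊹ x := by rw [add_assoc, add_one]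
  have h₂ : neg (one ⊹ x) ⊹ (one ⊹ x) = one ⊹ x := by rw [add_assoc, add_one]
  have h := luk x (one ⊹ x)
  rwa [h₁, h₂, neg_one_add_add_self, eq_comm] at h

theorem zero_add (x : Regular B) : zero ⊹ x = x := by
  have h₁ : neg x ⊹ (zero ⊹ x) = one ⊹ x := by
    rw [add_assoc, add_zero, neg_add_self_eq_one_add]
  have h₂ : neg (one ⊹ x) ⊹ (zero ⊹ x) = x := by
    rw [add_assoc, add_zero, neg_one_add_add_self]
  have h := luk x (zero ⊹ x)
  rwa [h₁, h₂, neg_zero_add_add_self, neg_one, eq_comm] at h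

theorem neg_add_self (x : Regular B) : neg x ⊹ x = one := by
  simpa only [zero_add] using neg_zero_add_add_self x

theorem add_neg_self (x : Regular B) : x ⊹ neg x = one := by
  simpa only [neg_neg] using neg_add_self (neg x)

theorem neg_add_add_self (w x : Regular B) : neg x ⊹ (w ⊹ x) = one := by
  have h₁ : w ⊹ x ⊹ neg x = one := by rw [← add_assoc, add_neg_self, add_one]
  have h := luk (neg (w ⊹ x)) (neg x)
  rw [neg_neg, neg_neg, h₁, neg_one, zero_add] at h
  rw [h, ← add_assoc, neg_add_self, add_one]

theorem add_comm_of_add_eq_one {x y : Regular B} (h : x ⊹ y = one) : y ⊹ x = one := by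
  have h' := luk y (neg x)
  rw [neg_neg, h, neg_one, zero_add] at h'
  rw [← h', ← add_assoc, neg_add_self, add_one]

theorem neg_add_add_comm (x y : Regular B) : neg (x ⊹ y) ⊹ (y ⊹ x) = one := by
  have hluk := luk (neg x) y
  rw [neg_neg] at hluk
  have h := neg_add_add_self (neg (neg y ⊹ neg x)) (neg x)
  rw [neg_neg, ← hluk, add_assoc] at h
  have h' := add_comm_of_add_eq_one h
  rw [add_assoc] at h'
  exact add_comm_of_add_eq_one h'

theorem add_comm (x y : Regular B) : x ⊹ y = y ⊹ x := by
  have h := luk (x ⊹ y) (y ⊹ x)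
  rwa [neg_add_add_comm, neg_add_add_comm, neg_one, zero_add, zero_add, eq_comm] at h

instance : MV (Regular B) where
  add := QMV.add
  neg := QMV.neg
  zero := QMV.zero
  add_assoc := QMV.add_assoc
  add_comm := add_comm
  add_zero := add_zero
  neg_neg := QMV.neg_neg
  add_top x := by rw [QMV.neg_zero]; exact QMV.add_one x
  luk := QMV.luk

end Regular

end QMV

namespace SQPMV

open QMV

variable {B : Type*} [QMV B] [SQPMV B]

local infixl:65 " ⊹ " => QMV.add

theorem neg_half : neg (half : B) = half := by
  simpa only [sqrt_half] using (sqrt_sqrt (half : B)).symm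

theorem sqrt_add_zero_of_isRegular {x : B} (hx : IsRegular x) : sqrt x ⊹ zero = half := by
  have h := sqrt_add x zero
  rwa [hx] at h

theorem isRegular_half : IsRegular (half : B) := by
  rw [← sqrt_add_zero_of_isRegular isRegular_zero]; exact isRegular_add _ _

theorem one_mul (x : B) : mul one x = x ⊹ zero := by rw [mul_comm, mul_one]

theorem add_zero_add_add_zero (x y : B) : x ⊹ zero ⊹ (y ⊹ zero) = x ⊹ y := by
  have h := mul_distrib (one : B) (neg x) y
  simp only [one_mul, odot, QMV.neg_neg, neg_add_zero] at h
  rw [← neg_add_zero, add_add_zero] at h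
  simpa only [QMV.neg_neg] using (congrArg neg h).symm

theorem mul_add_zero_mul_add_zero (x y : B) : mul (x ⊹ zero) (y ⊹ zero) = mul x y := by
  have hleft (a w : B) : mul (a ⊹ zero) w = mul a (w ⊹ zero) := by
    rw [← mul_one a, ← mul_assoc, one_mul]
  rw [hleft, add_add_zero, ← mul_one y, mul_assoc, mul_one, ← mul_reg]

end SQPMV

namespace QMV.Regular

open SQPMV

variable {B : Type*} [QMV B] [SQPMV B]

instance : PMV (Regular B) where
  mul x y := ⟨mul x.1 y.1, (mul_reg x.1 y.1).symm⟩
  mul_comm x y := Subtype.ext (mul_comm x.1 y.1)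
  mul_assoc x y z := Subtype.ext (mul_assoc x.1 y.1 z.1)
  mul_one x := Subtype.ext <| by
    show mul x.1 (QMV.neg QMV.zero) = x.1
    rw [QMV.neg_zero, SQPMV.mul_one, x.2]
  mul_distrib x y z := Subtype.ext (mul_distrib x.1 y.1 z.1)

protected def half : Regular B := ⟨SQPMV.half, isRegular_half⟩

protected theorem neg_half : MV.neg (Regular.half : Regular B) = Regular.half :=
  Subtype.ext SQPMV.neg_half

end QMV.Regular

namespace SQPMV

open QMV

variable {B : Type*} [QMV B] [SQPMV B]

local infixl:65 " ⊹ " => QMV.add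

def toPair (x : B) : Regular B × Regular B :=
  (⟨x ⊹ zero, isRegular_add _ _⟩, ⟨sqrt x ⊹ zero, isRegular_add _ _⟩)

theorem evP_toPair (v : ℕ → B) (t : Trm) :
    evP Regular.half (toPair ∘ v) t = toPair (ev v t) := by
  induction t with
  | var n => rfl
  | zero =>
    exact Prod.ext (Subtype.ext isRegular_zero.symm)
      (Subtype.ext (sqrt_add_zero_of_isRegular isRegular_zero).symm)
  | half =>
    refine Prod.ext (Subtype.ext isRegular_half.symm) (Subtype.ext ?_)
    show half = sqrt half ⊹ zero
    rw [sqrt_half, isRegular_half]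
  | one =>
    refine Prod.ext (Subtype.ext ?_) (Subtype.ext (sqrt_add_zero_of_isRegular isRegular_one).symm)
    show neg zero = one ⊹ zero
    rw [QMV.neg_zero, QMV.isRegular_one]
  | neg t ih =>
    simp only [evP, ev, ih]
    refine Prod.ext (Subtype.ext (neg_add_zero _)) (Subtype.ext ?_)
    show neg (sqrt (ev v t) ⊹ zero) = sqrt (neg (ev v t)) ⊹ zero
    rw [sqrt_neg, neg_add_zero]
  | sqrt t ih =>
    simp only [evP, ev, ih]
    refine Prod.ext rfl (Subtype.ext ?_)
    show neg (ev v t ⊹ zero) = sqrt (sqrt (ev v t)) ⊹ zero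
    rw [sqrt_sqrt, neg_add_zero]
  | add s t ihs iht =>
    simp only [evP, ev, ihs, iht]
    refine Prod.ext (Subtype.ext ?_) (Subtype.ext (sqrt_add _ _).symm)
    show ev v s ⊹ zero ⊹ (ev v t ⊹ zero) = ev v s ⊹ ev v t ⊹ zero
    rw [add_zero_add_add_zero, add_add_zero]
  | mul s t ihs iht =>
    simp only [evP, ev, ihs, iht]
    refine Prod.ext (Subtype.ext ?_) (Subtype.ext (sqrt_mul _ _).symm)
    show mul (ev v s ⊹ zero) (ev v t ⊹ zero) = mul (ev v s) (ev v t) ⊹ zero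
    rw [mul_add_zero_mul_add_zero]
    exact mul_reg _ _

def IsRegularOrSqrt (x : B) : Prop := IsRegular x ∨ ∃ r : B, IsRegular r ∧ x = sqrt r

theorem isRegularOrSqrt_ev (v : ℕ → B) {t : Trm} (ht : ¬ t.IsUnaryOfVar) :
    IsRegularOrSqrt (ev v t) := by
  induction t with
  | var n => exact absurd trivial ht
  | zero => exact Or.inl isRegular_zero
  | half => exact Or.inl isRegular_half
  | one => exact Or.inl QMV.isRegular_one
  | add s t _ _ => exact Or.inl (isRegular_add _ _)
  | mul s t _ _ => exact Or.inl (mul_reg _ _).symm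
  | neg t ih =>
    rcases ih ht with hx | ⟨r, hr, hx⟩
    · exact Or.inl hx.neg
    · exact Or.inr ⟨neg r, hr.neg, by rw [ev, hx, sqrt_neg]⟩
  | sqrt t ih =>
    rcases ih ht with hx | ⟨r, hr, hx⟩
    · exact Or.inr ⟨_, hx, rfl⟩
    · exact Or.inl (by rw [ev, hx, sqrt_sqrt]; exact hr.neg)

theorem IsRegularOrSqrt.eq_one_of_toPair_eq {x : B} (hx : IsRegularOrSqrt x)
    (h : toPair x = (MV.one, Regular.half)) : x = one := by
  have h₁ : x ⊹ zero = one := (congrArg (fun p => p.1.1) h).trans QMV.neg_zero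
  have h₂ : sqrt x ⊹ zero = half := congrArg (fun p => p.2.1) h
  rcases hx with hx | ⟨r, hr, rfl⟩
  · rwa [hx] at h₁
  · have hr_half : r = half := by
      rw [sqrt_sqrt, hr.neg] at h₂
      rw [← QMV.neg_neg r, h₂, neg_half]
    rw [← h₁, sqrt_add_zero_of_isRegular hr, hr_half, sqrt_half]

end SQPMV

/-- If `t = 1` holds in every pair construction `S_A` over a totally ordered
PMV-algebra `A` with `¬½ = ½`, then `t = 1` holds in every √qPMV-algebra. -/
theorem pair_chains_complete_for_sqpmv (t : Trm)
    (h : ∀ (A : Type u) [MV A] [PMV A] (half : A), MV.neg half = half →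
      (∀ x y : A, MV.le x y ∨ MV.le y x) →
      ∀ v : ℕ → A × A, evP half v t = ((MV.one : A), half)) :
    ∀ (B : Type u) [QMV B] [SQPMV B] (v : ℕ → B), ev v t = QMV.one := by
  intro B _ _ v
  have hpair := evP_eq_of_forall_chains h (QMV.Regular.neg_half (B := B)) (SQPMV.toPair ∘ v)
  rw [SQPMV.evP_toPair] at hpair
  exact (SQPMV.isRegularOrSqrt_ev v (Trm.not_isUnaryOfVar h)).eq_one_of_toPair_eq hpair
end
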